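/- arXiv:2403.02105 — 6 statements merged into one kernel-verified Lean document; each statement's English description precedes it below -/
import Mathlib

section
/- Let A be a ring and let L --g--> M --f--> N be a complex of A-modules (i.e. f ∘ g = 0), where L, M, N are each equipped with an increasing ℤ-indexed filtration by submodules (F_α L)_{α∈ℤ}, (F_α M)_{α∈ℤ}, (F_α N)_{α∈ℤ}, and g and f are filtered, i.e. g(F_α L) ⊆ F_α M and f(F_α M) ⊆ F_α N for all α. Assume the filtration on M is exhaustive (⋃_{α∈ℤ} F_α M = M) and that the associated graded sequence is exact, in the sense that for every α ∈ ℤ and every m ∈ F_α M with f(m) ∈ F_{α−1} N there exists l ∈ F_α L with m − g(l) ∈ F_{α−1} M. Then f is strict: for every α ∈ ℤ, f(M) ∩ F_α N = f(F_α M). -/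
/-!
An element `f m` of `f(M) ∩ F_α N` with `m ∈ F_β M`, `β > α`, has the form `f m'` with
`m' ∈ F_{β-1} M`: graded exactness in degree `β` gives `l` with `m - g l ∈ F_{β-1} M`, and
`f (m - g l) = f m` because `f ∘ g = 0`. Exhaustiveness provides a starting degree `β`, and
descending one degree at a time reaches `α`.
-/

namespace Submodule

variable {A L M N : Type*} [Semiring A]
  [AddCommGroup L] [Module A L] [AddCommGroup M] [Module A M] [AddCommGroup N] [Module A N]
  {g : L →ₗ[A] M} {f : M →ₗ[A] N}
  {FL : ℤ → Submodule A L} {FM : ℤ → Submodule A M} {FN : ℤ → Submodule A N}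

theorem exists_map_eq_of_mem_pred (hfg : ∀ l : L, f (g l) = 0)
    (hgr : ∀ α : ℤ, ∀ m ∈ FM α, f m ∈ FN (α - 1) → ∃ l ∈ FL α, m - g l ∈ FM (α - 1))
    {β : ℤ} {m : M} (hm : m ∈ FM β) (hfm : f m ∈ FN (β - 1)) :
    ∃ m' ∈ FM (β - 1), f m' = f m := by
  obtain ⟨l, -, hml⟩ := hgr β m hm hfm
  exact ⟨m - g l, hml, by rw [map_sub, hfg, sub_zero]⟩

theorem exists_map_eq_of_le (hFN : Monotone FN) (hfg : ∀ l : L, f (g l) = 0)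
    (hgr : ∀ α : ℤ, ∀ m ∈ FM α, f m ∈ FN (α - 1) → ∃ l ∈ FL α, m - g l ∈ FM (α - 1))
    {α β : ℤ} (hαβ : α ≤ β) {m : M} (hm : m ∈ FM β) (hfm : f m ∈ FN α) :
    ∃ m' ∈ FM α, f m' = f m := by
  induction β, hαβ using Int.leInduction generalizing m with
  | base => exact ⟨m, hm, rfl⟩
  | succ β hαβ ih =>
    have hfm' : f m ∈ FN (β + 1 - 1) := by
      rw [add_sub_cancel_right]
      exact hFN hαβ hfm
    obtain ⟨m₁, hm₁, hfm₁⟩ := exists_map_eq_of_mem_pred hfg hgr hm hfm'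
    rw [add_sub_cancel_right] at hm₁
    obtain ⟨m', hm', hfm'⟩ := ih hm₁ (hfm₁ ▸ hfm)
    exact ⟨m', hm', hfm'.trans hfm₁⟩

end Submodule

theorem strict_of_graded_exact_general {A L M N : Type*} [Ring A]
    [AddCommGroup L] [Module A L] [AddCommGroup M] [Module A M]
    [AddCommGroup N] [Module A N]
    (g : L →ₗ[A] M) (f : M →ₗ[A] N)
    (hfg : ∀ l : L, f (g l) = 0)
    (FL : ℤ → Submodule A L) (FM : ℤ → Submodule A M) (FN : ℤ → Submodule A N)
    (hFM : Monotone FM) (hFN : Monotone FN)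
    (hf : ∀ α : ℤ, (FM α).map f ≤ FN α)
    (hexh : ∀ m : M, ∃ α : ℤ, m ∈ FM α)
    (hgr : ∀ α : ℤ, ∀ m ∈ FM α, f m ∈ FN (α - 1) →
      ∃ l ∈ FL α, m - g l ∈ FM (α - 1)) :
    ∀ α : ℤ, LinearMap.range f ⊓ FN α = (FM α).map f := by
  intro α
  refine le_antisymm ?_ fun _ hn ↦ ⟨LinearMap.map_le_range hn, hf α hn⟩
  rintro _ ⟨⟨m, rfl⟩, hfm⟩
  obtain ⟨β, hm⟩ := hexh m
  rcases le_total β α with hβα | hαβ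
  · exact ⟨m, hFM hβα hm, rfl⟩
  · exact Submodule.exists_map_eq_of_le hFN hfg hgr hαβ hm hfm

/-- **Strictness from graded exactness** (Kouchnirenko, Lemma 4.3).
Let `L --g--> M --f--> N` be a complex of `A`-modules equipped with increasing
`ℤ`-indexed filtrations, with `g` and `f` filtered maps.  If the filtration on `M`
is exhaustive and the associated graded sequence is exact, then `f` is strict:
`f(M) ∩ F_α N = f(F_α M)` for every `α`. -/
theorem strict_of_graded_exact {A L M N : Type*} [Ring A]
    [AddCommGroup L] [Module A L] [AddCommGroup M] [Module A M]
    [AddCommGroup N] [Module A N]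
    (g : L →ₗ[A] M) (f : M →ₗ[A] N)
    (hfg : ∀ l : L, f (g l) = 0)
    (FL : ℤ → Submodule A L) (FM : ℤ → Submodule A M) (FN : ℤ → Submodule A N)
    (hFL : Monotone FL) (hFM : Monotone FM) (hFN : Monotone FN)
    (hg : ∀ α : ℤ, (FL α).map g ≤ FM α)
    (hf : ∀ α : ℤ, (FM α).map f ≤ FN α)
    (hexh : ∀ m : M, ∃ α : ℤ, m ∈ FM α)
    (hgr : ∀ α : ℤ, ∀ m ∈ FM α, f m ∈ FN (α - 1) →
      ∃ l ∈ FL α, m - g l ∈ FM (α - 1)) :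
    ∀ α : ℤ, LinearMap.range f ⊓ FN α = (FM α).map f :=
  strict_of_graded_exact_general g f hfg FL FM FN hFM hFN hf hexh hgr
end

section
/- Let K be a field, H a finite-dimensional K-vector space, N : H → H a nilpotent linear endomorphism, and (Φ_i)_{i∈ℤ} an increasing ℤ-indexed filtration of H by subspaces which is separated (Φ_i = 0 for i sufficiently small) and exhaustive (Φ_i = H for i sufficiently large), such that N(Φ_i) ⊆ Φ_{i+1} for all i. Suppose that for every integer j ≥ 0 the map N^j is strict with respect to the shifted filtrations, i.e. range(N^j) ∩ Φ_{i+j} = N^j(Φ_i) for all i ∈ ℤ. Then there exists a family of subspaces (I_i)_{i∈ℤ} of H, all but finitely many zero, such that H is the internal direct sum of the I_i, Φ_k = Σ_{i ≤ k} I_i for every k ∈ ℤ, and N(I_i) ⊆ I_{i+1} for every i. -/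
/-!
The subspaces `I i` are built by descending induction on `i`, each as a complement of `Φ (i - 1)`
in `Φ i` inside `N⁻¹ (I (i + 1))`. For the induction to go on, `I i` must be chosen so that
`N^p Φ_{i-p} ⊆ N^p Φ_{i-1-p} + I i` for every `p`, i.e. compatibly with a whole chain of
subspaces at once. Such a simultaneous complement exists in the modular lattice of subspaces
because strictness of `N^p` gives `N^p Φ_{i-p} ∩ Φ_{i-1} = N^p Φ_{i-1-p}`, and nilpotency makes
the chain finite. Complements of `Φ (i - 1)` in `Φ i` for a separated, exhaustive filtration form
a finite direct sum decomposition adapted to `Φ`.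
-/

open Submodule

section ModularLattice

variable {α : Type*} [Lattice α] [BoundedOrder α] [IsModularLattice α] [ComplementedLattice α]

theorem exists_le_disjoint_sup_eq (U V : α) : ∃ C ≤ V, Disjoint U C ∧ U ⊔ C = U ⊔ V := by
  obtain ⟨C, hdisj, hsup⟩ :=
    IsModularLattice.exists_disjoint_and_sup_eq (inf_le_right : U ⊓ V ≤ V)
  have hCV : C ≤ V := hsup ▸ le_sup_right
  refine ⟨C, hCV, ?_, ?_⟩
  · rw [disjoint_iff, ← inf_eq_right.2 hCV, ← inf_assoc]
    exact hdisj.eq_bot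
  · rw [← hsup, ← sup_assoc, sup_inf_self]

theorem exists_simultaneous_compl_of_antitone (D : α) {A B : ℕ → α} (hA : Antitone A)
    (hB : Antitone B) {e : ℕ} (hAe : A e = ⊥) (hAD : ∀ p, A p ≤ B p ⊔ D ⊓ A p)
    (hAB : ∀ p, A p ⊓ B 0 ≤ B p) : ∃ I ≤ D ⊓ A 0, Disjoint (B 0) I ∧ ∀ p, A p ≤ B p ⊔ I := by
  induction e generalizing A B with
  | zero =>
    refine ⟨⊥, bot_le, disjoint_bot_right, fun p => ?_⟩
    exact (hA (Nat.zero_le p)).trans (hAe.le.trans bot_le)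
  | succ e ih =>
    obtain ⟨I', hI'A, hI'B, hI'⟩ := ih (A := fun p => A (p + 1)) (B := fun p => B (p + 1))
      (fun p q h => hA (by omega)) (fun p q h => hB (by omega)) hAe (fun p => hAD (p + 1))
      (fun p => (inf_le_inf_left _ (hB (Nat.zero_le 1))).trans (hAB (p + 1)))
    obtain ⟨C, hCle, hCdisj, hCsup⟩ := exists_le_disjoint_sup_eq (B 0 ⊔ I') (D ⊓ A 0)
    -- `I' ⊆ A 1` and `A 1 ∩ B 0 ⊆ B 1`, which is disjoint from `I'`
    have hB0I' : Disjoint (B 0) I' := by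
      refine disjoint_iff_inf_le.2 (le_trans ?_ hI'B.eq_bot.le)
      exact le_inf ((le_inf (inf_le_right.trans (hI'A.trans inf_le_right)) inf_le_left).trans
        (hAB 1)) inf_le_right
    refine ⟨I' ⊔ C, sup_le (hI'A.trans (inf_le_inf_left D (hA (Nat.zero_le 1)))) hCle,
      hB0I'.disjoint_sup_right_of_disjoint_sup_left hCdisj, ?_⟩
    rintro (_ | p)
    · calc A 0 ≤ B 0 ⊔ D ⊓ A 0 := hAD 0
        _ ≤ B 0 ⊔ I' ⊔ D ⊓ A 0 := sup_le_sup_right le_sup_left _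
        _ = B 0 ⊔ (I' ⊔ C) := by rw [← hCsup, sup_assoc]
    · exact (hI' p).trans (sup_le_sup_left le_sup_left _)

end ModularLattice

theorem iSupIndep_of_disjoint_iSup_lt {α ι : Type*} [CompleteLattice α] [IsModularLattice α]
    [IsCompactlyGenerated α] [LinearOrder ι] {f : ι → α}
    (h : ∀ i, Disjoint (f i) (⨆ j < i, f j)) : iSupIndep f := by
  classical
  refine iSupIndep_iff_supIndep.2 fun s => ?_
  induction s using Finset.induction_on_max with
  | empty => exact Finset.supIndep_empty f
  | insert a s hlt ih =>
    exact ih.insert <| (h a).mono_right <|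
      Finset.sup_le fun j hj => le_iSup₂_of_le j (hlt j hj) le_rfl

theorem Submodule.le_sup_comap_inf_of_map_le {R M M₂ : Type*} [Ring R] [AddCommGroup M]
    [AddCommGroup M₂] [Module R M] [Module R M₂] {f : M →ₗ[R] M₂} {A B : Submodule R M}
    {P : Submodule R M₂} (hBA : B ≤ A) (h : A.map f ≤ B.map f ⊔ P) : A ≤ B ⊔ P.comap f ⊓ A := by
  intro x hx
  obtain ⟨_, ⟨y, hy, rfl⟩, u, hu, hxyu⟩ := mem_sup.1 (h (mem_map_of_mem hx))
  have hfxy : f (x - y) = u := by rw [map_sub, ← hxyu, add_sub_cancel_left]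
  exact mem_sup.2
    ⟨y, hy, x - y, ⟨mem_comap.2 (hfxy ▸ hu), sub_mem hx (hBA hy)⟩, add_sub_cancel _ _⟩

section Splitting

variable {α : Type*} [CompleteLattice α] {Φ J : ℤ → α}

theorem eq_iSup_le_of_sup_eq (hmono : Monotone Φ) (hsep : ∃ a, ∀ i ≤ a, Φ i = ⊥)
    (hsup : ∀ i, Φ (i - 1) ⊔ J i = Φ i) (k : ℤ) : Φ k = ⨆ i ≤ k, J i := by
  refine le_antisymm ?_ (iSup₂_le fun i hik => (hsup i ▸ le_sup_right).trans (hmono hik))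
  obtain ⟨a, ha⟩ := hsep
  obtain hka | hak := le_total k a
  · simp [ha k hka]
  induction k, hak using Int.leInduction with
  | base => simp [ha a le_rfl]
  | succ k _ ih =>
    rw [← hsup (k + 1), add_sub_cancel_right]
    exact sup_le (ih.trans (biSup_mono fun i hi => hi.trans (Int.le_add_one le_rfl)))
      (le_iSup₂_of_le (k + 1) le_rfl le_rfl)

theorem iSupIndep_of_disjoint_sup_eq [IsModularLattice α] [IsCompactlyGenerated α]
    (hmono : Monotone Φ) (hdisj : ∀ i, Disjoint (Φ (i - 1)) (J i))
    (hsup : ∀ i, Φ (i - 1) ⊔ J i = Φ i) :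
    iSupIndep J :=
  iSupIndep_of_disjoint_iSup_lt fun i => (hdisj i).symm.mono_right <|
    iSup₂_le fun j hji => (hsup j ▸ le_sup_right).trans (hmono (Int.le_sub_one_of_lt hji))

theorem finite_setOf_ne_bot_of_disjoint_sup_eq (hsep : ∃ a, ∀ i ≤ a, Φ i = ⊥)
    (hexh : ∃ b, ∀ i, b ≤ i → Φ i = ⊤) (hdisj : ∀ i, Disjoint (Φ (i - 1)) (J i))
    (hsup : ∀ i, Φ (i - 1) ⊔ J i = Φ i) : {i | J i ≠ ⊥}.Finite := by
  obtain ⟨a, ha⟩ := hsep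
  obtain ⟨b, hb⟩ := hexh
  refine (Set.finite_Ioc a b).subset fun i hi =>
    ⟨not_le.1 fun hia => hi ?_, not_lt.1 fun hbi => hi ?_⟩
  · exact le_bot_iff.1 (ha i hia ▸ hsup i ▸ le_sup_right)
  · exact top_disjoint.1 (hb (i - 1) (by omega) ▸ hdisj i)

end Splitting

section StrictNilpotent

variable {K H : Type*} [Field K] [AddCommGroup H] [Module K H] {N : H →ₗ[K] H}
  {Φ : ℤ → Submodule K H}

/-- The invariant of the descending construction: an admissible `P` can serve as `I (i + 1)`. -/
def IsAdmissible (Φ : ℤ → Submodule K H) (N : H →ₗ[K] H) (i : ℤ) (P : Submodule K H) : Prop :=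
  ∀ p : ℕ, (Φ (i - p)).map (N ^ (p + 1)) ≤ (Φ (i - 1 - p)).map (N ^ (p + 1)) ⊔ P

theorem map_map_pow (N : H →ₗ[K] H) (U : Submodule K H) (p : ℕ) :
    (U.map (N ^ p)).map N = U.map (N ^ (p + 1)) := by
  rw [pow_succ', Module.End.mul_eq_comp, map_comp]

theorem antitone_map_pow (hNΦ : ∀ i, (Φ i).map N ≤ Φ (i + 1)) (i : ℤ) :
    Antitone fun p : ℕ => (Φ (i - p)).map (N ^ p) :=
  antitone_nat_of_succ_le fun p => by
    rw [pow_succ, Module.End.mul_eq_comp, map_comp]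
    exact map_mono ((hNΦ _).trans_eq (by congr 1; push_cast; ring))

theorem exists_compl_of_isAdmissible (hmono : Monotone Φ)
    (hNΦ : ∀ i, (Φ i).map N ≤ Φ (i + 1))
    (hstrict : ∀ (j : ℕ) (i : ℤ), LinearMap.range (N ^ j) ⊓ Φ (i + j) = (Φ i).map (N ^ j))
    {e : ℕ} (hNe : N ^ e = 0) {i : ℤ} {P : Submodule K H} (hP : IsAdmissible Φ N i P) :
    ∃ I ≤ P.comap N,
      Disjoint (Φ (i - 1)) I ∧ Φ (i - 1) ⊔ I = Φ i ∧ IsAdmissible Φ N (i - 1) I := by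
  have hA0 : (Φ (i - (0 : ℕ))).map (N ^ 0) = Φ i := by simp [Module.End.one_eq_id]
  have hB0 : (Φ (i - 1 - (0 : ℕ))).map (N ^ 0) = Φ (i - 1) := by simp [Module.End.one_eq_id]
  obtain ⟨I, hI, hdisj, hle⟩ := exists_simultaneous_compl_of_antitone (P.comap N) (e := e)
    (antitone_map_pow hNΦ i) (antitone_map_pow hNΦ (i - 1)) (by simp [hNe])
    (fun p => le_sup_comap_inf_of_map_le (map_mono (hmono (by omega)))
      (by rw [map_map_pow, map_map_pow]; exact hP p))
    (fun p => by
      rw [hB0, ← hstrict p (i - 1 - p), sub_add_cancel]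
      exact inf_le_inf_right _ LinearMap.map_le_range)
  rw [hA0] at hI
  refine ⟨I, hI.trans inf_le_left, hB0 ▸ hdisj,
    le_antisymm (sup_le (hmono (by omega)) (hI.trans inf_le_right)) (hA0 ▸ hB0 ▸ hle 0),
    fun p => ?_⟩
  have hshift (k : ℤ) : k - ((p + 1 : ℕ) : ℤ) = k - 1 - p := by push_cast; ring
  simpa only [hshift] using hle (p + 1)

theorem exists_partial_splitting (hmono : Monotone Φ) (hNΦ : ∀ i, (Φ i).map N ≤ Φ (i + 1))
    (hstrict : ∀ (j : ℕ) (i : ℤ), LinearMap.range (N ^ j) ⊓ Φ (i + j) = (Φ i).map (N ^ j))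
    {e : ℕ} (hNe : N ^ e = 0) {b : ℤ} (hb : ∀ i, b ≤ i → Φ i = ⊤) (i : ℤ) (hi : i ≤ b + e) :
    ∃ J : ℤ → Submodule K H, (∀ j ≤ i, J j = ⊥) ∧
      (∀ j, i < j →
        Disjoint (Φ (j - 1)) (J j) ∧ Φ (j - 1) ⊔ J j = Φ j ∧ (J j).map N ≤ J (j + 1)) ∧
      IsAdmissible Φ N i (J (i + 1)) := by
  induction i, hi using Int.leInductionDown with
  | base =>
    refine ⟨⊥, fun _ _ => rfl, fun j hj => ?_, fun p => ?_⟩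
    · simp [hb j (by omega), hb (j - 1) (by omega)]
    · obtain hep | hpe := le_or_gt e (p + 1)
      · simp [pow_eq_zero_of_le hep hNe]
      · rw [hb (b + e - 1 - p) (by omega)]
        exact le_sup_of_le_left (map_mono le_top)
  | pred i _ ih =>
    obtain ⟨J, hJbot, hJ, hJadm⟩ := ih
    obtain ⟨I, hIN, hIdisj, hIsup, hIadm⟩ :=
      exists_compl_of_isAdmissible hmono hNΦ hstrict hNe hJadm
    refine ⟨Function.update J i I, fun j hj => ?_, fun j hj => ?_, ?_⟩
    · rw [Function.update_of_ne (by omega)]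
      exact hJbot j (by omega)
    · obtain rfl | hij := eq_or_lt_of_le (Int.le_of_sub_one_lt hj)
      · simpa [Function.update_of_ne] using ⟨hIdisj, hIsup, map_le_iff_le_comap.2 hIN⟩
      · simpa [Function.update_of_ne hij.ne', Function.update_of_ne (by omega : j + 1 ≠ i)]
          using hJ j hij
    · simpa using hIadm

theorem exists_splitting_of_strict (hN : IsNilpotent N) (hmono : Monotone Φ)
    (hsep : ∃ a, ∀ i ≤ a, Φ i = ⊥) (hexh : ∃ b, ∀ i, b ≤ i → Φ i = ⊤)
    (hNΦ : ∀ i, (Φ i).map N ≤ Φ (i + 1))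
    (hstrict : ∀ (j : ℕ) (i : ℤ), LinearMap.range (N ^ j) ⊓ Φ (i + j) = (Φ i).map (N ^ j)) :
    ∃ J : ℤ → Submodule K H, (∀ j, Disjoint (Φ (j - 1)) (J j)) ∧ (∀ j, Φ (j - 1) ⊔ J j = Φ j) ∧
      ∀ j, (J j).map N ≤ J (j + 1) := by
  obtain ⟨e, hNe⟩ := hN
  obtain ⟨a, ha⟩ := hsep
  obtain ⟨b, hb⟩ := hexh
  obtain ⟨J, hJbot, hJ, -⟩ :=
    exists_partial_splitting hmono hNΦ hstrict hNe hb (min a (b + e)) (min_le_right _ _)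
  refine ⟨J, fun j => ?_, fun j => ?_, fun j => ?_⟩ <;>
    obtain hj | hj := le_or_gt j (min a (b + e))
  all_goals first
    | simp [hJbot j hj, ha j (hj.trans (min_le_left _ _)), ha (j - 1) (by omega)]
    | simp [(hJ j hj).1, (hJ j hj).2.1, (hJ j hj).2.2]

end StrictNilpotent

theorem exists_splitting_of_strict_nilpotent_general
    {K H : Type*} [Field K] [AddCommGroup H] [Module K H]
    (N : H →ₗ[K] H) (hN : IsNilpotent N)
    (Φ : ℤ → Submodule K H) (hmono : Monotone Φ)
    (hsep : ∃ a : ℤ, ∀ i ≤ a, Φ i = ⊥)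
    (hexh : ∃ b : ℤ, ∀ i : ℤ, b ≤ i → Φ i = ⊤)
    (hNΦ : ∀ i : ℤ, (Φ i).map N ≤ Φ (i + 1))
    (hstrict : ∀ j : ℕ, ∀ i : ℤ,
      LinearMap.range (N ^ j) ⊓ Φ (i + j) = (Φ i).map (N ^ j)) :
    ∃ I : ℤ → Submodule K H,
      {i : ℤ | I i ≠ ⊥}.Finite ∧
      DirectSum.IsInternal I ∧
      (∀ k : ℤ, Φ k = ⨆ i ≤ k, I i) ∧
      (∀ i : ℤ, (I i).map N ≤ I (i + 1)) := by
  obtain ⟨J, hdisj, hsup, hNJ⟩ := exists_splitting_of_strict hN hmono hsep hexh hNΦ hstrict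
  have hspan := eq_iSup_le_of_sup_eq hmono hsep hsup
  refine ⟨J, finite_setOf_ne_bot_of_disjoint_sup_eq hsep hexh hdisj hsup,
    DirectSum.isInternal_submodule_of_iSupIndep_of_iSup_eq_top
      (iSupIndep_of_disjoint_sup_eq hmono hdisj hsup) ?_, hspan, hNJ⟩
  obtain ⟨b, hb⟩ := hexh
  rw [eq_top_iff, ← hb b le_rfl, hspan b]
  exact iSup₂_le fun i _ => le_iSup J i

/-- **Splitting of a strictly filtered nilpotent endomorphism**
(M. Saito, Proposition 3.7; consequence).  Let `H` be a finite-dimensional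
vector space, `N` a nilpotent endomorphism, and `Φ` an increasing, separated,
exhaustive `ℤ`-indexed filtration with `N (Φ i) ⊆ Φ (i+1)`, such that every
power `N^j` is strict for the shifted filtrations.  Then there is a family of
subspaces `I i`, all but finitely many zero, with `H = ⊕ᵢ I i`,
`Φ k = Σ_{i ≤ k} I i`, and `N (I i) ⊆ I (i+1)`. -/
theorem exists_splitting_of_strict_nilpotent
    {K H : Type*} [Field K] [AddCommGroup H] [Module K H]
    [FiniteDimensional K H]
    (N : H →ₗ[K] H) (hN : IsNilpotent N)
    (Φ : ℤ → Submodule K H) (hmono : Monotone Φ)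
    (hsep : ∃ a : ℤ, ∀ i ≤ a, Φ i = ⊥)
    (hexh : ∃ b : ℤ, ∀ i : ℤ, b ≤ i → Φ i = ⊤)
    (hNΦ : ∀ i : ℤ, (Φ i).map N ≤ Φ (i + 1))
    (hstrict : ∀ j : ℕ, ∀ i : ℤ,
      LinearMap.range (N ^ j) ⊓ Φ (i + j) = (Φ i).map (N ^ j)) :
    ∃ I : ℤ → Submodule K H,
      {i : ℤ | I i ≠ ⊥}.Finite ∧
      DirectSum.IsInternal I ∧
      (∀ k : ℤ, Φ k = ⨆ i ≤ k, I i) ∧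
      (∀ i : ℤ, (I i).map N ≤ I (i + 1)) :=
  exists_splitting_of_strict_nilpotent_general N hN Φ hmono hsep hexh hNΦ hstrict
end

section
/- Let K be a field, H a finite-dimensional K-vector space, N : H → H a nilpotent linear endomorphism, and (Φ_i)_{i∈ℤ} an increasing ℤ-indexed filtration of H by subspaces which is separated (Φ_i = 0 for i sufficiently small) and exhaustive (Φ_i = H for i sufficiently large), such that N(Φ_i) ⊆ Φ_{i+1} for all i. Suppose that for every integer j ≥ 0, range(N^j) ∩ Φ_{i+j} = N^j(Φ_i) for all i ∈ ℤ. Then there exist a finite index set ι, vectors e : ι → H, integers p : ι → ℤ, and positive natural numbers m : ι → ℕ such that: (a) the family of vectors N^k(e_i) for i ∈ ι and 0 ≤ k < m_i is a basis of H; (b) N^{m_i}(e_i) = 0 for every i; and (c) for every j ∈ ℤ, Φ_j is the linear span of the vectors N^k(e_i) with i ∈ ι, 0 ≤ k < m_i and p_i + k ≤ j. In other words, (H, Φ_•, N) is isomorphic to a direct sum of copies of (K[N]/(N^{m}), F_{•−p}, N), where F_k K[N]/(N^m) = span{1, N, …, N^k}. -/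
/-!
Induct on an `N`-stable subspace `V` on which every `N ^ j` is strict. Let `n + 1` be the
nilpotency index of `N` on `V`, `p` the lowest level with `N ^ n (Φ p ⊓ V) ≠ 0`, and
`e ∈ Φ p ⊓ V` with `N ^ n e ≠ 0`. Strictness of `N ^ n` at level `p - 1` forces
`N ^ n e ∉ Φ (p - 1 + n)`, so some functional `φ` vanishes on `Φ (p - 1 + n)` with
`φ (N ^ n e) = 1`. The functionals `φ ∘ N ^ (n - k)` are then dual to the chain `N ^ k e`, and
the resulting projection onto the chain maps `Φ j` into the span of the `N ^ k e` with
`p + k ≤ j`. Hence `V` splits, compatibly with `Φ`, into the chain of `e` and the `N`-stable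
complement `V ∩ ⋂ s, ker (φ ∘ N ^ s)`, on which strictness persists.
-/

open Submodule Set

section FilteredJordan

variable {K H : Type*} [Field K] [AddCommGroup H] [Module K H]

section Definitions

variable (N : H →ₗ[K] H) (Φ : ℤ → Submodule K H) {ι : Type*} (e : ι → H) (p : ι → ℤ)
  (m : ι → ℕ)

def jordanChain : (Σ i, Fin (m i)) → H := fun x => (N ^ (x.2 : ℕ)) (e x.1)

def jordanChainLE (j : ℤ) : Set H :=
  {h | ∃ (i : ι) (k : ℕ), k < m i ∧ p i + (k : ℤ) ≤ j ∧ h = (N ^ k) (e i)}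

structure IsFilteredJordanBasis (V : Submodule K H) : Prop where
  pos : ∀ i, 0 < m i
  linearIndependent : LinearIndependent K (jordanChain N e m)
  span_eq : span K (range (jordanChain N e m)) = V
  pow_apply_eq_zero : ∀ i, (N ^ m i) (e i) = 0
  inf_eq : ∀ j, Φ j ⊓ V = span K (jordanChainLE N e p m j)

-- Only one inclusion: the other one follows from `N (Φ i) ≤ Φ (i + 1)`.
def IsStrictOn (V : Submodule K H) : Prop :=
  ∀ (j : ℕ) (i : ℤ), V.map (N ^ j) ⊓ Φ (i + j) ≤ (Φ i ⊓ V).map (N ^ j)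

end Definitions

variable {N : H →ₗ[K] H} {Φ : ℤ → Submodule K H}

theorem jordanChain_sumElim {ι ι' : Type*} (e : ι → H) (e' : ι' → H) (m : ι → ℕ)
    (m' : ι' → ℕ) :
    jordanChain N (Sum.elim e e') (Sum.elim m m') =
      Sum.elim (jordanChain N e m) (jordanChain N e' m') ∘ Equiv.sumSigmaDistrib _ := by
  ext ⟨i | i, k⟩ <;> rfl

theorem range_jordanChain_sumElim {ι ι' : Type*} (e : ι → H) (e' : ι' → H) (m : ι → ℕ)
    (m' : ι' → ℕ) :
    range (jordanChain N (Sum.elim e e') (Sum.elim m m')) =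
      range (jordanChain N e m) ∪ range (jordanChain N e' m') := by
  rw [← Sum.elim_range, jordanChain_sumElim]
  exact (Equiv.surjective _).range_comp _

theorem jordanChainLE_sumElim {ι ι' : Type*} (e : ι → H) (e' : ι' → H) (p : ι → ℤ)
    (p' : ι' → ℤ) (m : ι → ℕ) (m' : ι' → ℕ) (j : ℤ) :
    jordanChainLE N (Sum.elim e e') (Sum.elim p p') (Sum.elim m m') j =
      jordanChainLE N e p m j ∪ jordanChainLE N e' p' m' j := by
  ext h
  simp only [jordanChainLE, mem_ofPred_eq, mem_union, Sum.exists, Sum.elim_inl, Sum.elim_inr]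

namespace IsFilteredJordanBasis

theorem bot : IsFilteredJordanBasis N Φ (Empty.elim : Empty → H) Empty.elim Empty.elim ⊥ where
  pos i := i.elim
  linearIndependent := linearIndependent_empty_type
  span_eq := by simp
  pow_apply_eq_zero i := i.elim
  inf_eq j := by simp [jordanChainLE]

theorem sum {ι ι' : Type*} {e : ι → H} {p : ι → ℤ} {m : ι → ℕ} {e' : ι' → H} {p' : ι' → ℤ}
    {m' : ι' → ℕ} {V W : Submodule K H} (hV : IsFilteredJordanBasis N Φ e p m V)
    (hW : IsFilteredJordanBasis N Φ e' p' m' W) (hVW : Disjoint V W)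
    (hsplit : ∀ j, Φ j ⊓ (V ⊔ W) ≤ Φ j ⊓ V ⊔ Φ j ⊓ W) :
    IsFilteredJordanBasis N Φ (Sum.elim e e') (Sum.elim p p') (Sum.elim m m') (V ⊔ W) where
  pos := Sum.rec hV.pos hW.pos
  linearIndependent := by
    rw [jordanChain_sumElim]
    exact (hV.linearIndependent.sum_type hW.linearIndependent
      (by rwa [hV.span_eq, hW.span_eq])).comp _ (Equiv.injective _)
  span_eq := by
    rw [range_jordanChain_sumElim, span_union, hV.span_eq, hW.span_eq]
  pow_apply_eq_zero := Sum.rec hV.pow_apply_eq_zero hW.pow_apply_eq_zero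
  inf_eq j := by
    rw [jordanChainLE_sumElim, span_union, ← hV.inf_eq, ← hW.inf_eq]
    exact (hsplit j).antisymm
      (sup_le (inf_le_inf_left _ le_sup_left) (inf_le_inf_left _ le_sup_right))

end IsFilteredJordanBasis

theorem pow_apply_mem_of_map_le (hNΦ : ∀ i, (Φ i).map N ≤ Φ (i + 1)) (s : ℕ) {i : ℤ} {x : H}
    (hx : x ∈ Φ i) : (N ^ s) x ∈ Φ (i + s) := by
  induction s with
  | zero => simpa using hx
  | succ s ih =>
    rw [pow_succ', Module.End.mul_apply, Nat.cast_succ, ← add_assoc]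
    exact hNΦ _ (mem_map_of_mem ih)

theorem pow_apply_eq_zero_of_map_eq_bot {V : Submodule K H} {n s : ℕ}
    (hn : V.map (N ^ n) = ⊥) (hs : n ≤ s) {x : H} (hx : x ∈ V) : (N ^ s) x = 0 := by
  have : (N ^ n) x = 0 := (mem_bot K).mp (hn ▸ mem_map_of_mem hx)
  rw [← Nat.sub_add_cancel hs, pow_add, Module.End.mul_apply, this, map_zero]

theorem exists_map_pow_ne_bot_map_pow_succ_eq_bot (hN : IsNilpotent N) {V : Submodule K H}
    (hV : V ≠ ⊥) : ∃ n : ℕ, V.map (N ^ n) ≠ ⊥ ∧ V.map (N ^ (n + 1)) = ⊥ :=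
  Nat.exists_not_and_succ_of_not_zero_of_exists (by simpa [Module.End.one_eq_id] using hV)
    (hN.imp fun r hr => by simp [hr])

theorem IsStrictOn.of_split {V B W : Submodule K H} (h : IsStrictOn N Φ V) (hWV : W ≤ V)
    (hB : B ≤ B.comap N) (hW : W ≤ W.comap N) (hBW : Disjoint B W)
    (hsplit : ∀ i, Φ i ⊓ V ≤ Φ i ⊓ B ⊔ Φ i ⊓ W) : IsStrictOn N Φ W := by
  rintro j i x ⟨⟨w₀, hw₀, rfl⟩, hx⟩
  obtain ⟨y, hy, hyx⟩ := h j i ⟨mem_map_of_mem (hWV hw₀), hx⟩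
  obtain ⟨b, hb, w, hw, rfl⟩ := mem_sup.mp (hsplit i hy)
  have hb0 : (N ^ j) b = 0 := by
    refine disjoint_def.mp hBW _ (Module.End.pow_apply_mem_of_forall_mem j hB b hb.2) ?_
    have : (N ^ j) b = (N ^ j) w₀ - (N ^ j) w := by rw [← hyx, map_add, add_sub_cancel_right]
    rw [this]
    exact sub_mem (Module.End.pow_apply_mem_of_forall_mem j hW w₀ hw₀)
      (Module.End.pow_apply_mem_of_forall_mem j hW w hw.2)
  exact ⟨w, hw, by rw [← hyx, map_add, hb0, zero_add]⟩

theorem IsStrictOn.exists_pow_apply_notMem {V : Submodule K H} (h : IsStrictOn N Φ V)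
    (hsep : ∃ a : ℤ, ∀ i ≤ a, Φ i = ⊥) (hexh : ∃ b : ℤ, ∀ i : ℤ, b ≤ i → Φ i = ⊤) {n : ℕ}
    (hn : V.map (N ^ n) ≠ ⊥) : ∃ p : ℤ, ∃ e ∈ Φ p ⊓ V, (N ^ n) e ∉ Φ (p - 1 + n) := by
  obtain ⟨a, ha⟩ := hsep
  obtain ⟨b, hb⟩ := hexh
  obtain ⟨p, hp, hmin⟩ := Int.exists_least_of_bdd
    (P := fun z => (Φ z ⊓ V).map (N ^ n) ≠ ⊥)
    ⟨a + 1, fun z hz => by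
      by_contra! hlt
      exact hz (by rw [ha z (by omega), bot_inf_eq, Submodule.map_bot])⟩
    ⟨b, by rwa [hb b le_rfl, top_inf_eq]⟩
  obtain ⟨_, ⟨e, he, rfl⟩, hne⟩ := exists_mem_ne_zero_of_ne_bot hp
  refine ⟨p, e, he, fun hmem => hne ?_⟩
  have hbot : (Φ (p - 1) ⊓ V).map (N ^ n) = ⊥ := by
    by_contra hne'
    have := hmin _ hne'
    omega
  exact (mem_bot K).mp (hbot ▸ h n (p - 1) ⟨mem_map_of_mem he.2, hmem⟩)

theorem exists_dual_apply_eq_one_of_notMem {U : Submodule K H} {x : H} (hx : x ∉ U) :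
    ∃ φ : Module.Dual K H, (∀ y ∈ U, φ y = 0) ∧ φ x = 1 := by
  obtain ⟨f, hfx, hf⟩ := exists_dual_map_eq_bot_of_notMem hx inferInstance
  refine ⟨(f x)⁻¹ • f, fun y hy => ?_, inv_mul_cancel₀ hfx⟩
  have : f y = 0 := (mem_bot K).mp (hf ▸ mem_map_of_mem hy)
  simp [this]

section Chain

variable (N) (φ : Module.Dual K H) (e : H) (n : ℕ)

def chainSpan : Submodule K H := span K (range fun k : Fin (n + 1) => (N ^ (k : ℕ)) e)

def chainCoeff (k : Fin (n + 1)) : Module.Dual K H := φ ∘ₗ N ^ (n - k)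

def chainProj : H →ₗ[K] H := ∑ k, (chainCoeff N φ n k).smulRight ((N ^ (k : ℕ)) e)

def chainCompl (V : Submodule K H) : Submodule K H := V ⊓ ⨅ s : ℕ, LinearMap.ker (φ ∘ₗ N ^ s)

variable {N φ e n}

theorem chainProj_apply (x : H) :
    chainProj N φ e n x = ∑ k, chainCoeff N φ n k x • (N ^ (k : ℕ)) e := by
  simp [chainProj]

theorem chainCoeff_sum_smul (hφ : ∀ s, φ ((N ^ s) e) = if s = n then 1 else 0)
    (c : Fin (n + 1) → K) (k : Fin (n + 1)) :
    chainCoeff N φ n k (∑ l, c l • (N ^ (l : ℕ)) e) = c k := by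
  have hkl (l : Fin (n + 1)) : n - k + l = n ↔ l = k := by omega
  simp only [chainCoeff, LinearMap.comp_apply, map_sum, map_smul, ← Module.End.mul_apply,
    ← pow_add, hφ, hkl, smul_eq_mul, mul_ite, mul_one, mul_zero, Finset.sum_ite_eq',
    Finset.mem_univ, if_true]

theorem chainCoeff_chainProj (hφ : ∀ s, φ ((N ^ s) e) = if s = n then 1 else 0) (x : H)
    (k : Fin (n + 1)) : chainCoeff N φ n k (chainProj N φ e n x) = chainCoeff N φ n k x := by
  rw [chainProj_apply, chainCoeff_sum_smul hφ]

theorem linearIndependent_chain (hφ : ∀ s, φ ((N ^ s) e) = if s = n then 1 else 0) :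
    LinearIndependent K fun k : Fin (n + 1) => (N ^ (k : ℕ)) e :=
  Fintype.linearIndependent_iff.mpr fun c hc k => by
    rw [← chainCoeff_sum_smul hφ c k, hc, map_zero]

theorem chainProj_mem_chainSpan (x : H) : chainProj N φ e n x ∈ chainSpan N e n := by
  rw [chainProj_apply]
  exact sum_mem fun k _ => smul_mem _ _ (subset_span ⟨k, rfl⟩)

theorem chainProj_eq_self (hφ : ∀ s, φ ((N ^ s) e) = if s = n then 1 else 0) {x : H}
    (hx : x ∈ chainSpan N e n) : chainProj N φ e n x = x := by
  obtain ⟨c, rfl⟩ := (mem_span_range_iff_exists_fun K).mp hx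
  simp only [chainProj_apply, chainCoeff_sum_smul hφ]

theorem chainSpan_le {V : Submodule K H} (hV : V ≤ V.comap N) (he : e ∈ V) :
    chainSpan N e n ≤ V :=
  span_le.mpr <| range_subset_iff.mpr fun k => Module.End.pow_apply_mem_of_forall_mem k hV e he

theorem chainSpan_le_comap (hzero : (N ^ (n + 1)) e = 0) :
    chainSpan N e n ≤ (chainSpan N e n).comap N := by
  refine span_le.mpr <| range_subset_iff.mpr fun k => ?_
  rw [SetLike.mem_coe, mem_comap, ← Module.End.mul_apply, ← pow_succ']
  rcases (Nat.lt_succ_iff.mp k.2).lt_or_eq with hk | hk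
  · exact subset_span ⟨⟨k + 1, by omega⟩, rfl⟩
  · rw [hk, hzero]
    exact zero_mem _

theorem chainCompl_le (V : Submodule K H) : chainCompl N φ V ≤ V := inf_le_left

theorem chainCompl_le_comap {V : Submodule K H} (hV : V ≤ V.comap N) :
    chainCompl N φ V ≤ (chainCompl N φ V).comap N := by
  intro x hx
  simp only [chainCompl, mem_comap, mem_inf, mem_iInf, LinearMap.mem_ker,
    LinearMap.comp_apply] at hx ⊢
  refine ⟨hV hx.1, fun s => ?_⟩
  rw [← Module.End.mul_apply, ← pow_succ]
  exact hx.2 (s + 1)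

theorem disjoint_chainSpan_chainCompl (hφ : ∀ s, φ ((N ^ s) e) = if s = n then 1 else 0)
    (V : Submodule K H) : Disjoint (chainSpan N e n) (chainCompl N φ V) := by
  refine disjoint_def.mpr fun x hxB hxW => ?_
  have hcoeff (k : Fin (n + 1)) : chainCoeff N φ n k x = 0 :=
    LinearMap.mem_ker.mp (mem_iInf _ |>.mp (mem_inf.mp hxW).2 (n - k))
  rw [← chainProj_eq_self hφ hxB, chainProj_apply]
  simp [hcoeff]

theorem sub_chainProj_mem_chainCompl (hφ : ∀ s, φ ((N ^ s) e) = if s = n then 1 else 0)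
    {V : Submodule K H} (hV : V ≤ V.comap N) (hn : V.map (N ^ (n + 1)) = ⊥) (he : e ∈ V)
    {x : H} (hx : x ∈ V) : x - chainProj N φ e n x ∈ chainCompl N φ V := by
  have hy : x - chainProj N φ e n x ∈ V :=
    sub_mem hx (chainSpan_le hV he (chainProj_mem_chainSpan x))
  refine mem_inf.mpr ⟨hy, mem_iInf _ |>.mpr fun s => LinearMap.mem_ker.mpr ?_⟩
  rcases le_or_gt s n with hs | hs
  · have := chainCoeff_chainProj hφ x ⟨n - s, by omega⟩
    simp only [chainCoeff, LinearMap.comp_apply, Nat.sub_sub_self hs] at this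
    simp [this]
  · simp [pow_apply_eq_zero_of_map_eq_bot hn hs hy]

theorem chainSpan_sup_chainCompl (hφ : ∀ s, φ ((N ^ s) e) = if s = n then 1 else 0)
    {V : Submodule K H} (hV : V ≤ V.comap N) (hn : V.map (N ^ (n + 1)) = ⊥) (he : e ∈ V) :
    chainSpan N e n ⊔ chainCompl N φ V = V := by
  refine le_antisymm (sup_le (chainSpan_le hV he) (chainCompl_le V)) fun x hx => ?_
  rw [← add_sub_cancel (chainProj N φ e n x) x]
  exact add_mem_sup (chainProj_mem_chainSpan x) (sub_chainProj_mem_chainCompl hφ hV hn he hx)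

end Chain

theorem span_jordanChainLE_le (hmono : Monotone Φ) (hNΦ : ∀ i, (Φ i).map N ≤ Φ (i + 1))
    {ι : Type*} {e : ι → H} {p : ι → ℤ} (he : ∀ i, e i ∈ Φ (p i)) (m : ι → ℕ) (j : ℤ) :
    span K (jordanChainLE N e p m j) ≤ Φ j :=
  span_le.mpr fun _ ⟨i, k, _, hk, hx⟩ => hx ▸ hmono hk (pow_apply_mem_of_map_le hNΦ k (he i))

section FilteredChain

variable {φ : Module.Dual K H} {e : H} {n : ℕ} {p : ℤ}

theorem apply_pow_apply_eq_ite (hmono : Monotone Φ) (hNΦ : ∀ i, (Φ i).map N ≤ Φ (i + 1))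
    {V : Submodule K H} (hn : V.map (N ^ (n + 1)) = ⊥) (he : e ∈ Φ p ⊓ V)
    (hφΦ : ∀ y ∈ Φ (p - 1 + n), φ y = 0) (hφ1 : φ ((N ^ n) e) = 1) (s : ℕ) :
    φ ((N ^ s) e) = if s = n then 1 else 0 := by
  rcases lt_trichotomy s n with hs | rfl | hs
  · rw [if_neg hs.ne, hφΦ _ (hmono (by omega) (pow_apply_mem_of_map_le hNΦ s he.1))]
  · rw [if_pos rfl, hφ1]
  · rw [if_neg hs.ne', pow_apply_eq_zero_of_map_eq_bot hn hs he.2, map_zero]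

theorem chainCoeff_eq_zero_of_mem (hmono : Monotone Φ) (hNΦ : ∀ i, (Φ i).map N ≤ Φ (i + 1))
    (hφΦ : ∀ y ∈ Φ (p - 1 + n), φ y = 0) {j : ℤ} {x : H} (hx : x ∈ Φ j) {k : Fin (n + 1)}
    (hk : j < p + k) : chainCoeff N φ n k x = 0 :=
  hφΦ _ (hmono (by omega) (pow_apply_mem_of_map_le hNΦ (n - k) hx))

theorem chainProj_mem_span_jordanChainLE (hmono : Monotone Φ)
    (hNΦ : ∀ i, (Φ i).map N ≤ Φ (i + 1)) (hφΦ : ∀ y ∈ Φ (p - 1 + n), φ y = 0) {j : ℤ}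
    {x : H} (hx : x ∈ Φ j) :
    chainProj N φ e n x ∈
      span K (jordanChainLE N (fun _ : Unit => e) (fun _ => p) (fun _ => n + 1) j) := by
  rw [chainProj_apply]
  refine sum_mem fun k _ => ?_
  by_cases hk : p + k ≤ j
  · exact smul_mem _ _ (subset_span ⟨(), k, k.2, hk, rfl⟩)
  · rw [chainCoeff_eq_zero_of_mem hmono hNΦ hφΦ hx (not_le.mp hk), zero_smul]
    exact zero_mem _

theorem inf_chainSpan_eq (hmono : Monotone Φ) (hNΦ : ∀ i, (Φ i).map N ≤ Φ (i + 1))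
    (hφ : ∀ s, φ ((N ^ s) e) = if s = n then 1 else 0) (he : e ∈ Φ p)
    (hφΦ : ∀ y ∈ Φ (p - 1 + n), φ y = 0) (j : ℤ) :
    Φ j ⊓ chainSpan N e n =
      span K (jordanChainLE N (fun _ : Unit => e) (fun _ => p) (fun _ => n + 1) j) := by
  refine le_antisymm (fun x hx => ?_) (le_inf (span_jordanChainLE_le hmono hNΦ (fun _ => he) _ j)
    (span_mono ?_))
  · rw [← chainProj_eq_self hφ hx.2]
    exact chainProj_mem_span_jordanChainLE hmono hNΦ hφΦ hx.1
  · rintro _ ⟨_, k, hk, _, rfl⟩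
    exact ⟨⟨k, hk⟩, rfl⟩

theorem inf_le_inf_chainSpan_sup_inf_chainCompl (hmono : Monotone Φ)
    (hNΦ : ∀ i, (Φ i).map N ≤ Φ (i + 1)) (hφ : ∀ s, φ ((N ^ s) e) = if s = n then 1 else 0)
    (hφΦ : ∀ y ∈ Φ (p - 1 + n), φ y = 0) {V : Submodule K H} (hV : V ≤ V.comap N)
    (hn : V.map (N ^ (n + 1)) = ⊥) (he : e ∈ Φ p ⊓ V) (j : ℤ) :
    Φ j ⊓ V ≤ Φ j ⊓ chainSpan N e n ⊔ Φ j ⊓ chainCompl N φ V := by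
  rintro x ⟨hxΦ, hxV⟩
  have hπ : chainProj N φ e n x ∈ Φ j ⊓ chainSpan N e n := by
    rw [inf_chainSpan_eq hmono hNΦ hφ he.1 hφΦ]
    exact chainProj_mem_span_jordanChainLE hmono hNΦ hφΦ hxΦ
  rw [← add_sub_cancel (chainProj N φ e n x) x]
  exact add_mem_sup hπ
    ⟨sub_mem hxΦ hπ.1, sub_chainProj_mem_chainCompl hφ hV hn he.2 hxV⟩

theorem isFilteredJordanBasis_chainSpan (hmono : Monotone Φ)
    (hNΦ : ∀ i, (Φ i).map N ≤ Φ (i + 1)) (hφ : ∀ s, φ ((N ^ s) e) = if s = n then 1 else 0)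
    (he : e ∈ Φ p) (hφΦ : ∀ y ∈ Φ (p - 1 + n), φ y = 0) (hzero : (N ^ (n + 1)) e = 0) :
    IsFilteredJordanBasis N Φ (fun _ : Unit => e) (fun _ => p) (fun _ => n + 1)
      (chainSpan N e n) := by
  have hchain : jordanChain N (fun _ : Unit => e) (fun _ => n + 1) =
      (fun k : Fin (n + 1) => (N ^ (k : ℕ)) e) ∘ Equiv.uniqueSigma _ := rfl
  refine ⟨fun _ => n.succ_pos, ?_, ?_, fun _ => hzero, inf_chainSpan_eq hmono hNΦ hφ he hφΦ⟩
  · exact hchain ▸ (linearIndependent_chain hφ).comp _ (Equiv.injective _)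
  · rw [hchain, (Equiv.surjective _).range_comp]
    rfl

end FilteredChain

theorem exists_isFilteredJordanBasis [FiniteDimensional K H] (hN : IsNilpotent N)
    (hmono : Monotone Φ) (hsep : ∃ a : ℤ, ∀ i ≤ a, Φ i = ⊥)
    (hexh : ∃ b : ℤ, ∀ i : ℤ, b ≤ i → Φ i = ⊤) (hNΦ : ∀ i, (Φ i).map N ≤ Φ (i + 1))
    (V : Submodule K H) (hV : V ≤ V.comap N) (hstrict : IsStrictOn N Φ V) :
    ∃ (ι : Type) (_ : Fintype ι) (e : ι → H) (p : ι → ℤ) (m : ι → ℕ),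
      IsFilteredJordanBasis N Φ e p m V := by
  induction V using WellFoundedLT.induction with | _ V ih => ?_
  rcases eq_or_ne V ⊥ with rfl | hV0
  · exact ⟨Empty, inferInstance, _, _, _, .bot⟩
  obtain ⟨n, hn, hn1⟩ := exists_map_pow_ne_bot_map_pow_succ_eq_bot hN hV0
  obtain ⟨p, e, he, hne⟩ := hstrict.exists_pow_apply_notMem hsep hexh hn
  obtain ⟨φ, hφΦ, hφ1⟩ := exists_dual_apply_eq_one_of_notMem hne
  have hφ := apply_pow_apply_eq_ite hmono hNΦ hn1 he hφΦ hφ1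
  have hzero : (N ^ (n + 1)) e = 0 := pow_apply_eq_zero_of_map_eq_bot hn1 le_rfl he.2
  have hdisj := disjoint_chainSpan_chainCompl hφ V
  have hsup := chainSpan_sup_chainCompl hφ hV hn1 he.2
  have hsplit := inf_le_inf_chainSpan_sup_inf_chainCompl hmono hNΦ hφ hφΦ hV hn1 he
  have hlt : chainCompl N φ V < V := by
    refine (chainCompl_le V).lt_of_ne fun hWV => ?_
    have he0 : e ∈ chainSpan N e n := subset_span ⟨0, by simp⟩
    have : e = 0 := disjoint_def.mp hdisj e he0 (hWV.symm ▸ he.2)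
    exact hne (by simp [this])
  obtain ⟨ι, _, e', p', m', hW⟩ := ih _ hlt (chainCompl_le_comap hV)
    (hstrict.of_split (chainCompl_le V) (chainSpan_le_comap hzero) (chainCompl_le_comap hV)
      hdisj hsplit)
  have hB := isFilteredJordanBasis_chainSpan hmono hNΦ hφ he.1 hφΦ hzero
  exact ⟨Unit ⊕ ι, inferInstance, _, _, _,
    hsup ▸ hB.sum hW hdisj fun j => by rw [hsup]; exact hsplit j⟩

end FilteredJordan

/-- **Jordan-type decomposition of a strictly filtered nilpotent endomorphism**
(M. Saito, Proposition 3.7).  Under the strictness hypothesis, `(H, Φ, N)` is a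
direct sum of copies of `(K[N]/(N^m), F_{•-p}, N)`: there are vectors `e i`,
integers `p i` and positive lengths `m i` such that the `N^k (e i)`
(for `0 ≤ k < m i`) form a basis of `H`, `N^(m i) (e i) = 0`, and `Φ j` is
spanned by those `N^k (e i)` with `p i + k ≤ j`. -/
theorem exists_jordan_basis_of_strict_nilpotent
    {K H : Type*} [Field K] [AddCommGroup H] [Module K H]
    [FiniteDimensional K H]
    (N : H →ₗ[K] H) (hN : IsNilpotent N)
    (Φ : ℤ → Submodule K H) (hmono : Monotone Φ)
    (hsep : ∃ a : ℤ, ∀ i ≤ a, Φ i = ⊥)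
    (hexh : ∃ b : ℤ, ∀ i : ℤ, b ≤ i → Φ i = ⊤)
    (hNΦ : ∀ i : ℤ, (Φ i).map N ≤ Φ (i + 1))
    (hstrict : ∀ j : ℕ, ∀ i : ℤ,
      LinearMap.range (N ^ j) ⊓ Φ (i + j) = (Φ i).map (N ^ j)) :
    ∃ (ι : Type) (_ : Fintype ι) (e : ι → H) (p : ι → ℤ) (m : ι → ℕ),
      (∀ i : ι, 0 < m i) ∧
      LinearIndependent K
        (fun x : Σ i : ι, Fin (m i) => (N ^ (x.2 : ℕ)) (e x.1)) ∧
      Submodule.span K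
        (Set.range (fun x : Σ i : ι, Fin (m i) => (N ^ (x.2 : ℕ)) (e x.1))) = ⊤ ∧
      (∀ i : ι, (N ^ (m i)) (e i) = 0) ∧
      (∀ j : ℤ, Φ j = Submodule.span K
        {h : H | ∃ (i : ι) (k : ℕ), k < m i ∧ p i + (k : ℤ) ≤ j ∧
          h = (N ^ k) (e i)}) := by
  have hstrict_top : IsStrictOn N Φ ⊤ := fun j i => by
    simpa [Submodule.map_top] using (hstrict j i).le
  obtain ⟨ι, hι, e, p, m, h⟩ :=
    exists_isFilteredJordanBasis hN hmono hsep hexh hNΦ ⊤ le_top hstrict_top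
  refine ⟨ι, hι, e, p, m, h.pos, h.linearIndependent, h.span_eq, h.pow_apply_eq_zero,
    fun j => ?_⟩
  simpa [jordanChainLE] using h.inf_eq j
end

section
/- Let K be a field of characteristic 0, let n, d ≥ 1, and let v : Fin d → (Fin n → ℤ) be a family of integer vectors whose images in ℚⁿ (i.e. the vectors (v j k : ℚ)_{k}) are linearly independent over ℚ. Let a : Fin d → K with a j ≠ 0 for all j, and let t : Fin n → K with t k ≠ 0 for all k. Then there exists an index i ∈ Fin n such that Σ_{j ∈ Fin d} (v j i : K) · a j · Π_{k ∈ Fin n} (t k)^{v j k} ≠ 0, where (t k)^{v j k} denotes the integer power (zpow) in the field K. (This says that the equations t_1 ∂f_F/∂t_1 = ⋯ = t_n ∂f_F/∂t_n = 0, for the Laurent polynomial f_F = Σ_j a_j t^{v_j} supported on a face with linearly independent vertices, have no solution in the algebraic torus, which is the key step in proving that f_{P,𝐚} is non-degenerate.) -/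
/-!
The vanishing of all logarithmic derivatives says that the coefficient vector
`c j = a j * t ^ v j` is a linear relation among the exponent vectors `v j`, viewed in `Kⁿ`.
Since `K` has characteristic zero, linear independence of integer vectors over `ℚ`
persists over `K`, so `c = 0`; but every `c j` is nonzero on the torus.
-/

open Finset

theorem linearIndependent_intCast_iff {R ι κ : Type*} [CommRing R] [IsDomain R] [CharZero R]
    [Finite κ] {v : ι → κ → ℤ} :
    LinearIndependent R (fun j k => (v j k : R)) ↔ LinearIndependent ℤ v :=
  linearIndependent_algebraMap_comp_iff (R := ℤ) (S := R)

theorem exists_sum_mul_ne_zero_of_linearIndependent {R ι κ : Type*} [CommRing R] [Fintype ι]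
    {w : ι → κ → R} (hw : LinearIndependent R w) {c : ι → R} (hc : c ≠ 0) :
    ∃ i, ∑ j, w j i * c j ≠ 0 := by
  by_contra! h
  refine hc (funext <| Fintype.linearIndependent_iff.1 hw c (funext fun i => ?_))
  simpa [Finset.sum_apply, mul_comm] using h i

theorem exists_log_deriv_ne_zero_of_linearIndependent_general
    {K : Type*} [Field K] [CharZero K] (n d : ℕ) (hd : 1 ≤ d)
    (v : Fin d → Fin n → ℤ)
    (hv : LinearIndependent ℚ (fun j : Fin d => fun k : Fin n => (v j k : ℚ)))
    (a : Fin d → K) (ha : ∀ j, a j ≠ 0)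
    (t : Fin n → K) (ht : ∀ k, t k ≠ 0) :
    ∃ i : Fin n,
      ∑ j : Fin d, (v j i : K) * a j * ∏ k : Fin n, t k ^ (v j k) ≠ 0 := by
  have hvK : LinearIndependent K (fun j k => (v j k : K)) :=
    linearIndependent_intCast_iff.2 (linearIndependent_intCast_iff.1 hv)
  have hc : (fun j => a j * ∏ k, t k ^ v j k) ≠ 0 := fun hc =>
    mul_ne_zero (ha ⟨0, hd⟩) (prod_ne_zero_iff.2 fun k _ => zpow_ne_zero _ (ht k))
      (congrFun hc ⟨0, hd⟩)
  simpa only [mul_assoc] using exists_sum_mul_ne_zero_of_linearIndependent hvK hc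

/-- **Non-vanishing of the logarithmic derivatives on a simplicial face.**
Let `K` be a field of characteristic `0`, and let `v : Fin d → (Fin n → ℤ)` be
integer vectors which are linearly independent over `ℚ`.  For any nonzero
coefficients `a j` and any point `t` of the torus `(K^*)^n`, some logarithmic
partial derivative `t_i ∂f_F/∂t_i = Σ_j (v j)_i a_j t^{v j}` of the face
polynomial `f_F = Σ_j a_j t^{v j}` is nonzero at `t`. -/
theorem exists_log_deriv_ne_zero_of_linearIndependent
    {K : Type*} [Field K] [CharZero K] (n d : ℕ) (hn : 1 ≤ n) (hd : 1 ≤ d)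
    (v : Fin d → Fin n → ℤ)
    (hv : LinearIndependent ℚ (fun j : Fin d => fun k : Fin n => (v j k : ℚ)))
    (a : Fin d → K) (ha : ∀ j, a j ≠ 0)
    (t : Fin n → K) (ht : ∀ k, t k ≠ 0) :
    ∃ i : Fin n,
      ∑ j : Fin d, (v j i : K) * a j * ∏ k : Fin n, t k ^ (v j k) ≠ 0 :=
  exists_log_deriv_ne_zero_of_linearIndependent_general n d hd v hv a ha t ht
end

section
/- Let K be a field of characteristic 0 and n ≥ 1. Let S be a finite set of integer vectors in Fin n → ℤ, let ι : (Fin n → ℤ) → (Fin n → ℝ) be the canonical map, and let P = convexHull ℝ (ι '' S) ⊆ ℝⁿ. Let a : (Fin n → ℤ) → K satisfy a v ≠ 0 for all v ∈ S. Assume: (i) 0 lies in the interior of P; (ii) for every nonempty exposed face F of P with F ≠ P, the set T_F = {v ∈ S : ι v ∈ F} is nonempty with F = convexHull ℝ (ι '' T_F), and the family (ι v)_{v ∈ T_F} is linearly independent over ℝ (this holds when P is a simplicial polytope with vertex set ι '' S). Then the Laurent polynomial f_{P,𝐚} = Σ_{v ∈ S} a_v t^v is non-degenerate: for every nonempty exposed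 face F of P with F ≠ P and every t : Fin n → K with t k ≠ 0 for all k, there exists i ∈ Fin n such that Σ_{v ∈ T_F} (v i : K) · a_v · Π_{k} (t k)^{v k} ≠ 0. -/
/-!
On a proper face `F` the exponent vectors `v ∈ T_F` are linearly independent over `ℝ`, hence over
`ℤ`, hence over any field of characteristic zero. If all logarithmic derivatives of `f_F` vanished
at a torus point `t`, then `∑_{v ∈ T_F} (a_v t^v) • v = 0` in `Kⁿ`, so every coefficient `a_v t^v`
would vanish; but these are nonzero.
-/

open scoped Classical

theorem linearIndepOn_intCast_iff {R ι σ : Type*} [CommRing R] [IsDomain R] [CharZero R]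
    [Finite σ] {v : ι → σ → ℤ} {s : Set ι} :
    LinearIndepOn R (fun i k => (v i k : R)) s ↔ LinearIndepOn ℤ v s := by
  simpa [LinearIndepOn, Function.comp_def] using
    linearIndependent_algebraMap_comp_iff (S := R) (v := fun i : s => v i)

theorem exists_sum_mul_ne_zero_of_linearIndepOn {R ι σ : Type*} [CommRing R] {w : ι → σ → R}
    {T : Finset ι} (hw : LinearIndepOn R w T) {c : ι → R} (hc : ∃ v ∈ T, c v ≠ 0) :
    ∃ i, ∑ v ∈ T, w v i * c v ≠ 0 := by
  obtain ⟨v₀, hv₀, hcv₀⟩ := hc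
  by_contra! h
  refine hcv₀ (linearIndepOn_finset_iff.mp hw c ?_ v₀ hv₀)
  ext i
  simpa [mul_comm] using h i

theorem nondegenerate_of_simplicial_newton_polytope_general
    {K : Type*} [Field K] [CharZero K] (n : ℕ)
    (S : Finset (Fin n → ℤ))
    (a : (Fin n → ℤ) → K) (ha : ∀ v ∈ S, a v ≠ 0)
    (P : Set (Fin n → ℝ))
    (hface : ∀ F : Set (Fin n → ℝ), IsExposed ℝ P F → F.Nonempty → F ≠ P →
      (S.filter (fun v : Fin n → ℤ => (fun k : Fin n => (v k : ℝ)) ∈ F)).Nonempty ∧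
      F = convexHull ℝ ((fun v : Fin n → ℤ => fun k : Fin n => (v k : ℝ)) ''
        ↑(S.filter (fun v : Fin n → ℤ => (fun k : Fin n => (v k : ℝ)) ∈ F))) ∧
      LinearIndependent ℝ
        (fun v : {v : Fin n → ℤ // v ∈ S ∧ (fun k : Fin n => (v k : ℝ)) ∈ F} =>
          fun k : Fin n => ((v : Fin n → ℤ) k : ℝ))) :
    ∀ F : Set (Fin n → ℝ), IsExposed ℝ P F → F.Nonempty → F ≠ P →
      ∀ t : Fin n → K, (∀ k, t k ≠ 0) →
        ∃ i : Fin n,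
          ∑ v ∈ S.filter (fun v : Fin n → ℤ => (fun k : Fin n => (v k : ℝ)) ∈ F),
            (v i : K) * a v * ∏ k : Fin n, t k ^ (v k) ≠ 0 := by
  intro F hF hFne hFP t ht
  obtain ⟨⟨v₀, hv₀⟩, -, hliℝ⟩ := hface F hF hFne hFP
  have hliK : LinearIndepOn K (fun (v : Fin n → ℤ) k => (v k : K))
      ↑(S.filter (fun v : Fin n → ℤ => (fun k : Fin n => (v k : ℝ)) ∈ F)) := by
    rw [Finset.coe_filter]
    exact linearIndepOn_intCast_iff.mpr (linearIndepOn_intCast_iff.mp hliℝ)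
  have hc₀ : a v₀ * ∏ k, t k ^ v₀ k ≠ 0 :=
    mul_ne_zero (ha v₀ (Finset.mem_filter.mp hv₀).1)
      (Finset.prod_ne_zero_iff.mpr fun k _ => zpow_ne_zero _ (ht k))
  simpa only [mul_assoc] using exists_sum_mul_ne_zero_of_linearIndepOn hliK ⟨v₀, hv₀, hc₀⟩

/-- **Non-degeneracy of `f_{P,𝐚}`** (Lemma on simplicial Newton polytopes).
Let `S` be a finite set of integer exponent vectors, `ι` the canonical map to
`ℝⁿ`, and `P = conv(ι(S))`.  Assume `0 ∈ int P` and that each proper nonempty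
exposed face `F` of `P` is the convex hull of the (nonempty) set of points of
`ι(S)` lying on it, these points being linearly independent over `ℝ`.  Then for
every such face `F` and every point `t` of the torus `(K^*)^n`, some logarithmic
derivative `t_i ∂f_F/∂t_i` of the face polynomial `f_F = Σ_{v ∈ S, ι v ∈ F} a_v t^v`
is nonzero at `t`: the Laurent polynomial `f_{P,𝐚}` is non-degenerate. -/
theorem nondegenerate_of_simplicial_newton_polytope
    {K : Type*} [Field K] [CharZero K] (n : ℕ) (hn : 1 ≤ n)
    (S : Finset (Fin n → ℤ))
    (a : (Fin n → ℤ) → K) (ha : ∀ v ∈ S, a v ≠ 0)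
    (P : Set (Fin n → ℝ))
    (hP : P = convexHull ℝ ((fun v : Fin n → ℤ => fun k : Fin n => (v k : ℝ)) '' ↑S))
    (h0 : (0 : Fin n → ℝ) ∈ interior P)
    (hface : ∀ F : Set (Fin n → ℝ), IsExposed ℝ P F → F.Nonempty → F ≠ P →
      (S.filter (fun v : Fin n → ℤ => (fun k : Fin n => (v k : ℝ)) ∈ F)).Nonempty ∧
      F = convexHull ℝ ((fun v : Fin n → ℤ => fun k : Fin n => (v k : ℝ)) ''
        ↑(S.filter (fun v : Fin n → ℤ => (fun k : Fin n => (v k : ℝ)) ∈ F))) ∧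
      LinearIndependent ℝ
        (fun v : {v : Fin n → ℤ // v ∈ S ∧ (fun k : Fin n => (v k : ℝ)) ∈ F} =>
          fun k : Fin n => ((v : Fin n → ℤ) k : ℝ))) :
    ∀ F : Set (Fin n → ℝ), IsExposed ℝ P F → F.Nonempty → F ≠ P →
      ∀ t : Fin n → K, (∀ k, t k ≠ 0) →
        ∃ i : Fin n,
          ∑ v ∈ S.filter (fun v : Fin n → ℤ => (fun k : Fin n => (v k : ℝ)) ∈ F),
            (v i : K) * a v * ∏ k : Fin n, t k ^ (v k) ≠ 0 :=
  nondegenerate_of_simplicial_newton_polytope_general n S a ha P hface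
end

section
/- Let E be a real normed vector space and let P ⊆ E be a convex compact set with 0 in its interior. Write g = gauge P for the Minkowski functional of P (so g(x) > 0 for x ≠ 0). Then for all nonzero u, w ∈ E: g(u + w) = g(u) + g(w) if and only if g( (1/2) • (g(u))⁻¹ • u + (1/2) • (g(w))⁻¹ • w ) = 1, i.e. if and only if the midpoint of the radial projections of u and w to the boundary of P lies on the boundary of P. (For a lattice polytope P this is the criterion that two exponents are 'cofacial', i.e. lie in a common cone over a face of P, which governs the multiplication rule t^u · t^w = t^{u+w} or 0 in the Newton-graded ring Gr^{𝒩} K[t^{±1}].) -/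
/-!
For a sublinear functional `p`, equality `p (x + y) = p x + p y` propagates to every
nonnegative combination `α • x + β • y`: if `β ≤ α`, write `α • (x + y)` as
`(α • x + β • y) + (α - β) • y` and use subadditivity in both directions.
For `g = gauge P` and `α = 1 / (2 g u)`, `β = 1 / (2 g w)` this turns additivity on `u, w` into
`g = 1` at the midpoint; conversely, additivity on the two halves of the midpoint propagates
back to `u = (2 g u) • (α • u)` and `w = (2 g w) • (β • w)`.
-/

section Sublinear

variable {E : Type*} [AddCommGroup E] [Module ℝ E] {p : E → ℝ}

theorem apply_smul_add_smul_of_apply_add_eq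
    (p_hom : ∀ c : ℝ, 0 ≤ c → ∀ x, p (c • x) = c * p x) (p_add : ∀ x y, p (x + y) ≤ p x + p y)
    {x y : E} (hxy : p (x + y) = p x + p y) {α β : ℝ} (hα : 0 ≤ α) (hβ : 0 ≤ β) :
    p (α • x + β • y) = α * p x + β * p y := by
  wlog hβα : β ≤ α generalizing x y α β
  · rw [add_comm, add_comm (α * p x)]
    exact this (by rwa [add_comm, add_comm (p y)]) hβ hα (le_of_not_ge hβα)
  have hsplit : α • (x + y) = (α • x + β • y) + (α - β) • y := by module
  have hlower : α * (p x + p y) ≤ p (α • x + β • y) + (α - β) * p y := by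
    rw [← hxy, ← p_hom α hα, hsplit, ← p_hom (α - β) (sub_nonneg.2 hβα)]
    exact p_add _ _
  have hupper : p (α • x + β • y) ≤ α * p x + β * p y := by
    simpa only [p_hom α hα, p_hom β hβ] using p_add (α • x) (β • y)
  linarith

end Sublinear

/-- **Cofaciality criterion via the gauge (Newton degree) function.**
Let `P` be a convex compact set with `0` in its interior in a real normed
space, and `g = gauge P` its Minkowski functional.  For nonzero `u, w`, the
gauge is additive on `u, w` (i.e. `deg_P(u+w) = deg_P(u) + deg_P(w)`, the
cofaciality condition governing `t^u · t^w` in `Gr^𝒩 K[t^{±1}]`) iff the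
midpoint of the radial projections of `u` and `w` to the boundary of `P` lies
on the boundary, i.e. has gauge `1`. -/
theorem gauge_add_eq_iff_midpoint_radial_proj
    {E : Type*} [NormedAddCommGroup E] [NormedSpace ℝ E]
    (P : Set E) (hP : Convex ℝ P) (hPc : IsCompact P)
    (h0 : (0 : E) ∈ interior P)
    (u w : E) (hu : u ≠ 0) (hw : w ≠ 0) :
    gauge P (u + w) = gauge P u + gauge P w ↔
      gauge P ((1 / 2 : ℝ) • (gauge P u)⁻¹ • u +
        (1 / 2 : ℝ) • (gauge P w)⁻¹ • w) = 1 := by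
  have habs : Absorbent ℝ P := absorbent_nhds_zero (mem_interior_iff_mem_nhds.1 h0)
  have hpos : ∀ x : E, x ≠ 0 → 0 < gauge P x :=
    fun x hx => (gauge_pos habs (hPc.totallyBounded.isVonNBounded ℝ)).2 hx
  have p_hom : ∀ c : ℝ, 0 ≤ c → ∀ x, gauge P (c • x) = c * gauge P x :=
    fun c hc x => gauge_smul_of_nonneg hc x
  have p_add := gauge_add_le hP habs
  have ha : 0 < gauge P u := hpos u hu
  have hb : 0 < gauge P w := hpos w hw
  simp only [smul_smul]
  constructor
  · intro hadd
    rw [apply_smul_add_smul_of_apply_add_eq p_hom p_add hadd (by positivity) (by positivity)]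
    field_simp
    norm_num
  · intro hmid
    have h := apply_smul_add_smul_of_apply_add_eq p_hom p_add
      (x := (1 / 2 * (gauge P u)⁻¹) • u) (y := (1 / 2 * (gauge P w)⁻¹) • w)
      (α := 2 * gauge P u) (β := 2 * gauge P w)
      (by rw [hmid, p_hom _ (by positivity), p_hom _ (by positivity)]; field_simp; norm_num)
      (by positivity) (by positivity)
    rw [smul_smul, smul_smul, p_hom _ (by positivity), p_hom _ (by positivity)] at h
    field_simp at h
    simpa only [one_smul] using h
end
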